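/- Let d ∈ {1,2,3,7,11} and let x = [a₁,…,a_n] be a continued fraction expansion with a_ℓ ∈ ℤ[ω_d] and |a_ℓ| ≥ 4.17209 for every ℓ ∈ {1,…,n}. If x = [b₁,…,b_m] is any continued fraction expansion of the same x with all b_k ∈ ℤ[ω_d] and (b₁,…,b_m) ≠ (a₁,…,a_n), then m > n. Hence [a₁,…,a_n] is the unique shortest continued fraction expansion of x with partial quotients in ℤ[ω_d], i.e., the unique geodesic expansion of x. -/

import Mathlib

/-!
Let `v₀ = ∞, v₁ = 0, v₂, …` be the vertices of the convergent walk of `a` and `w₀, w₁, …`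
those of `b`, and let `g(k, i) ∈ ℤ[ω_d]` (`walkDet a b k i`) be the determinant of `v_k`
and `w_i`. Nonzero elements of `ℤ[ω_d]` have norm at least `1`,
`g(k + 2, i) = a_{k+1} g(k + 1, i) + g(k, i)`, and
`g(k, i) g(k + 1, i + 1) - g(k + 1, i) g(k, i + 1) = ±1`. Because `|a_{k+1}| ≥ 7/2`, the
relation `|g(k + 1, i)| ≤ |g(k, i)| / 2` ("`w_i` is ahead of `v_k`", `IsAhead a b k i`)
passes from `(k + 1, i)` and from `(k + 1, i + 1)` back to `(k, i)`, and it fails for `i = 0`.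
Both walks end at `x`, so `g(n + 1, m + 1) = 0` and `w_{m+1}` is ahead of `v_n`; walking
back along the diagonal gives `n < m + 1`. If `m = n`, then `w_{j+2}` is ahead of `v_{j+1}`
for all `j < n`, which by induction on `j` forces `|a_{j+1} - b_{j+1}| ≤ 1/2`, hence
`b_{j+1} = a_{j+1}`.
-/

/-- `ω_d`: the generator of the ring of integers of `ℚ(√(-d))`. -/
noncomputable def omegaD (d : ℕ) : ℂ :=
  if d % 4 = 3 then (1 + Complex.I * Real.sqrt d) / 2 else Complex.I * Real.sqrt d

/-- The ring of integers `ℤ[ω_d]` of `ℚ(√(-d))`, as a subset of `ℂ`. -/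
def ringInt (d : ℕ) : Set ℂ := {z | ∃ a b : ℤ, z = (a : ℂ) + (b : ℂ) * omegaD d}

/-- `p` and `q` are coprime in `ℤ[ω_d]`. -/
def CoprimeIn (d : ℕ) (p q : ℂ) : Prop :=
  ∃ u v : ℂ, u ∈ ringInt d ∧ v ∈ ringInt d ∧ u * p + v * q = 1

/-- `x` is an element of the field `ℚ(√(-d)) ⊆ ℂ`. -/
def inK (d : ℕ) (x : ℂ) : Prop :=
  ∃ p q : ℂ, p ∈ ringInt d ∧ q ∈ ringInt d ∧ q ≠ 0 ∧ x = p / q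

/-- The point `p/q` of `ℂ ∪ {∞}`, with `p/0 = ∞`. -/
noncomputable def divC (p q : ℂ) : OnePoint ℂ :=
  if q = 0 then OnePoint.infty else ((p / q : ℂ) : OnePoint ℂ)

/-- Two points of `ℚ(√(-d)) ∪ {∞}` are Farey neighbours (joined by an edge of
the Farey graph `E_d`) if they have coprime representations `p₁/q₁`, `p₂/q₂`
with `|p₁q₂ − p₂q₁| = 1`. -/
def FareyAdj (d : ℕ) (x y : OnePoint ℂ) : Prop :=
  ∃ p₁ q₁ p₂ q₂ : ℂ, p₁ ∈ ringInt d ∧ q₁ ∈ ringInt d ∧ p₂ ∈ ringInt d ∧ q₂ ∈ ringInt d ∧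
    CoprimeIn d p₁ q₁ ∧ CoprimeIn d p₂ q₂ ∧ x = divC p₁ q₁ ∧ y = divC p₂ q₂ ∧
    ‖p₁ * q₂ - p₂ * q₁‖ = 1

/-- `f 0 → f 1 → ⋯ → f n` is a walk (of length `n`) in the Farey graph `E_d`. -/
def IsWalk (d n : ℕ) (f : ℕ → OnePoint ℂ) : Prop := ∀ k, k < n → FareyAdj d (f k) (f (k + 1))

/-- `f 0 → ⋯ → f n` is a geodesic path in `E_d`: a walk of minimal length
among all walks with the same endpoints. -/
def IsGeodesicWalk (d n : ℕ) (f : ℕ → OnePoint ℂ) : Prop :=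
  IsWalk d n f ∧ ∀ (m : ℕ) (g : ℕ → OnePoint ℂ), IsWalk d m g → g 0 = f 0 → g m = f n → n ≤ m

/-- Numerators of the convergents of `[a₁, a₂, …]` (`a 0` is unused):
`p₀ = 0`, `p₁ = 1`, `p_k = a_k p_{k−1} + p_{k−2}`. -/
noncomputable def cfP (a : ℕ → ℂ) : ℕ → ℂ
  | 0 => 0
  | 1 => 1
  | (k + 2) => a (k + 2) * cfP a (k + 1) + cfP a k

/-- Denominators of the convergents of `[a₁, a₂, …]`:
`q₀ = 1`, `q₁ = a₁`, `q_k = a_k q_{k−1} + q_{k−2}`. -/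
noncomputable def cfQ (a : ℕ → ℂ) : ℕ → ℂ
  | 0 => 1
  | 1 => a 1
  | (k + 2) => a (k + 2) * cfQ a (k + 1) + cfQ a k

/-- The walk `∞ → p₀/q₀ = 0 → p₁/q₁ → ⋯` along the convergents of `[a₁, a₂, …]`. -/
noncomputable def cfWalk (a : ℕ → ℂ) : ℕ → OnePoint ℂ :=
  fun k => if k = 0 then OnePoint.infty else divC (cfP a (k - 1)) (cfQ a (k - 1))

theorem omegaD_sq_mem (d : ℕ) : omegaD d ^ 2 ∈ ringInt d := by
  have hsq : (Real.sqrt d : ℂ) ^ 2 = d := by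
    rw [← Complex.ofReal_pow, Real.sq_sqrt (Nat.cast_nonneg d)]; norm_cast
  by_cases hc : d % 4 = 3
  · obtain ⟨c, hcd⟩ : 4 ∣ d + 1 := by omega
    have h4 : (d : ℂ) + 1 = 4 * c := by exact_mod_cast hcd
    refine ⟨-c, 1, ?_⟩
    simp only [omegaD, if_pos hc, Int.cast_neg, Int.cast_natCast, Int.cast_one]
    linear_combination (Real.sqrt d : ℂ) ^ 2 / 4 * Complex.I_sq - hsq / 4 - h4 / 4
  · refine ⟨-(d : ℤ), 0, ?_⟩
    simp only [omegaD, if_neg hc, Int.cast_neg, Int.cast_natCast, Int.cast_zero]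
    linear_combination (Real.sqrt d : ℂ) ^ 2 * Complex.I_sq - hsq

def ringIntSubring (d : ℕ) : Subring ℂ where
  carrier := ringInt d
  zero_mem' := ⟨0, 0, by simp⟩
  one_mem' := ⟨1, 0, by simp⟩
  add_mem' := by
    rintro _ _ ⟨p, q, rfl⟩ ⟨r, s, rfl⟩
    exact ⟨p + r, q + s, by push_cast; ring⟩
  neg_mem' := by
    rintro _ ⟨p, q, rfl⟩
    exact ⟨-p, -q, by push_cast; ring⟩
  mul_mem' := by
    rintro _ _ ⟨p, q, rfl⟩ ⟨r, s, rfl⟩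
    obtain ⟨e, f, hef⟩ := omegaD_sq_mem d
    exact ⟨p * r + e * q * s, p * s + q * r + f * q * s,
      by push_cast; linear_combination q * s * hef⟩

theorem exists_normSq_eq_intCast {d : ℕ} {z : ℂ} (hz : z ∈ ringInt d) :
    ∃ N : ℤ, Complex.normSq z = N := by
  obtain ⟨p, q, rfl⟩ := hz
  have hsq : Real.sqrt d ^ 2 = d := Real.sq_sqrt (Nat.cast_nonneg d)
  by_cases hc : d % 4 = 3
  · obtain ⟨c, hcd⟩ : 4 ∣ d + 1 := by omega
    have h4 : (d : ℝ) + 1 = 4 * c := by exact_mod_cast hcd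
    refine ⟨p ^ 2 + p * q + c * q ^ 2, ?_⟩
    have hz : (p : ℂ) + q * omegaD d
        = ((p + q / 2 : ℝ) : ℂ) + ((q * Real.sqrt d / 2 : ℝ) : ℂ) * Complex.I := by
      simp only [omegaD, if_pos hc]; push_cast; ring
    rw [hz, Complex.normSq_add_mul_I]
    push_cast
    linear_combination (q : ℝ) ^ 2 / 4 * hsq + (q : ℝ) ^ 2 / 4 * h4
  · refine ⟨p ^ 2 + d * q ^ 2, ?_⟩
    have hz : (p : ℂ) + q * omegaD d
        = ((p : ℝ) : ℂ) + ((q * Real.sqrt d : ℝ) : ℂ) * Complex.I := by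
      simp only [omegaD, if_neg hc]; push_cast; ring
    rw [hz, Complex.normSq_add_mul_I]
    push_cast
    linear_combination (q : ℝ) ^ 2 * hsq

theorem one_le_norm_of_mem_ringInt {d : ℕ} {z : ℂ} (hz : z ∈ ringInt d) (hz0 : z ≠ 0) :
    1 ≤ ‖z‖ := by
  obtain ⟨N, hN⟩ := exists_normSq_eq_intCast hz
  have hpos : (0 : ℝ) < N := hN ▸ Complex.normSq_pos.mpr hz0
  have h1 : (1 : ℝ) ≤ ‖z‖ ^ 2 := by
    rw [← Complex.normSq_eq_norm_sq, hN]; exact_mod_cast (Int.cast_pos.mp hpos : 0 < N)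
  nlinarith [norm_nonneg z]

section Convergents

variable {R : Type*} [CommRing R]

/-- Convergent numerators shifted by one, `convNum a (k + 1) = cfP a k`; index `0` carries
`p₋₁ = 1`, so that `convNum a k / convDen a k` is the `k`-th vertex of `cfWalk a`. -/
def convNum (a : ℕ → R) : ℕ → R
  | 0 => 1
  | 1 => 0
  | k + 2 => a (k + 1) * convNum a (k + 1) + convNum a k

def convDen (a : ℕ → R) : ℕ → R
  | 0 => 0
  | 1 => 1
  | k + 2 => a (k + 1) * convDen a (k + 1) + convDen a k

@[simp] theorem convNum_zero (a : ℕ → R) : convNum a 0 = 1 := rfl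
@[simp] theorem convNum_one (a : ℕ → R) : convNum a 1 = 0 := rfl
@[simp] theorem convDen_zero (a : ℕ → R) : convDen a 0 = 0 := rfl
@[simp] theorem convDen_one (a : ℕ → R) : convDen a 1 = 1 := rfl

theorem convNum_add_two (a : ℕ → R) (k : ℕ) :
    convNum a (k + 2) = a (k + 1) * convNum a (k + 1) + convNum a k := rfl

theorem convDen_add_two (a : ℕ → R) (k : ℕ) :
    convDen a (k + 2) = a (k + 1) * convDen a (k + 1) + convDen a k := rfl

theorem convNum_mul_convDen_sub (a : ℕ → R) (k : ℕ) :
    convNum a k * convDen a (k + 1) - convNum a (k + 1) * convDen a k = (-1) ^ k := by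
  induction k with
  | zero => simp
  | succ k ih =>
    rw [convNum_add_two, convDen_add_two, pow_succ, ← ih]; ring

theorem convNum_mem_and_convDen_mem {S : Subring R} {a : ℕ → R} {N : ℕ}
    (ha : ∀ k, 1 ≤ k → k ≤ N → a k ∈ S) :
    ∀ i, i ≤ N + 1 → convNum a i ∈ S ∧ convDen a i ∈ S
  | 0, _ => ⟨S.one_mem, S.zero_mem⟩
  | 1, _ => ⟨S.zero_mem, S.one_mem⟩
  | k + 2, hk => by
    have hak := ha (k + 1) (by omega) (by omega)
    obtain ⟨hp₁, hq₁⟩ := convNum_mem_and_convDen_mem ha (k + 1) (by omega)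
    obtain ⟨hp₀, hq₀⟩ := convNum_mem_and_convDen_mem ha k (by omega)
    exact ⟨S.add_mem (S.mul_mem hak hp₁) hp₀, S.add_mem (S.mul_mem hak hq₁) hq₀⟩

theorem convNum_eq_and_convDen_eq_of_eqOn {a b : ℕ → R} {j : ℕ}
    (hab : ∀ l, 1 ≤ l → l ≤ j → b l = a l) :
    ∀ i, i ≤ j + 1 → convNum b i = convNum a i ∧ convDen b i = convDen a i
  | 0, _ => ⟨rfl, rfl⟩
  | 1, _ => ⟨rfl, rfl⟩
  | k + 2, hk => by
    obtain ⟨hp₁, hq₁⟩ := convNum_eq_and_convDen_eq_of_eqOn hab (k + 1) (by omega)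
    obtain ⟨hp₀, hq₀⟩ := convNum_eq_and_convDen_eq_of_eqOn hab k (by omega)
    simp only [convNum_add_two, convDen_add_two, hab (k + 1) (by omega) (by omega),
      hp₁, hq₁, hp₀, hq₀, and_self]

theorem mul_convDen_eq_convNum {K : Type*} [Field K] {a u : ℕ → K} {x : K} {N : ℕ}
    (hu₀ : u 0 = x) (huN : u N = 0)
    (hu : ∀ k < N, a (k + 1) + u (k + 1) ≠ 0 ∧ u k = 1 / (a (k + 1) + u (k + 1))) :
    x * convDen a (N + 1) = convNum a (N + 1) := by
  have key : ∀ k ≤ N,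
      x * (convDen a (k + 1) + convDen a k * u k) = convNum a (k + 1) + convNum a k * u k := by
    intro k hk
    induction k with
    | zero => simp [hu₀]
    | succ k ih =>
      obtain ⟨hne, huk⟩ := hu k (by omega)
      have hinv : u k * (a (k + 1) + u (k + 1)) = 1 := by rw [huk, one_div_mul_cancel hne]
      rw [convNum_add_two, convDen_add_two]
      linear_combination (a (k + 1) + u (k + 1)) * ih (by omega)
        + (convNum a k - x * convDen a k) * hinv
  simpa [huN] using key N le_rfl

def walkDet (a b : ℕ → R) (k i : ℕ) : R :=
  convDen a k * convNum b i - convNum a k * convDen b i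

theorem walkDet_add_two_left (a b : ℕ → R) (k i : ℕ) :
    walkDet a b (k + 2) i = a (k + 1) * walkDet a b (k + 1) i + walkDet a b k i := by
  simp only [walkDet, convNum_add_two, convDen_add_two]; ring

theorem walkDet_mul_sub (a b : ℕ → R) (k i : ℕ) :
    walkDet a b k i * walkDet a b (k + 1) (i + 1) - walkDet a b (k + 1) i * walkDet a b k (i + 1)
      = (-1) ^ k * (-1) ^ i := by
  rw [← convNum_mul_convDen_sub a k, ← convNum_mul_convDen_sub b i]
  simp only [walkDet]; ring

theorem walkDet_mem {S : Subring R} {a b : ℕ → R} {n m : ℕ}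
    (ha : ∀ k, 1 ≤ k → k ≤ n → a k ∈ S) (hb : ∀ k, 1 ≤ k → k ≤ m → b k ∈ S)
    {k i : ℕ} (hk : k ≤ n + 1) (hi : i ≤ m + 1) : walkDet a b k i ∈ S := by
  obtain ⟨hpa, hqa⟩ := convNum_mem_and_convDen_mem ha k hk
  obtain ⟨hpb, hqb⟩ := convNum_mem_and_convDen_mem hb i hi
  exact S.sub_mem (S.mul_mem hqa hpb) (S.mul_mem hpa hqb)

theorem walkDet_eq_zero_of_mul_eq {a b : ℕ → R} {x : R} {k i : ℕ}
    (ha : x * convDen a k = convNum a k) (hb : x * convDen b i = convNum b i) :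
    walkDet a b k i = 0 := by
  rw [walkDet, ← ha, ← hb]; ring

theorem walkDet_of_eqOn {a b : ℕ → R} {j : ℕ} (hab : ∀ l, 1 ≤ l → l ≤ j → b l = a l) :
    walkDet a b (j + 1) (j + 2) = (-1) ^ j ∧
      walkDet a b (j + 2) (j + 2) = (a (j + 1) - b (j + 1)) * (-1) ^ j := by
  obtain ⟨hp₁, hq₁⟩ := convNum_eq_and_convDen_eq_of_eqOn hab (j + 1) le_rfl
  obtain ⟨hp₀, hq₀⟩ := convNum_eq_and_convDen_eq_of_eqOn hab j (by omega)
  rw [← convNum_mul_convDen_sub a j]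
  simp only [walkDet, convNum_add_two, convDen_add_two, hp₁, hq₁, hp₀, hq₀]
  constructor <;> ring

end Convergents

section Norms

variable {𝕜 : Type*} [NormedField 𝕜]

theorem norm_le_half_of_norm_mul_add_le {c A B : 𝕜} {r : ℝ} (hc : r + 2 ≤ ‖c‖)
    (h : ‖c * B + A‖ ≤ r * ‖B‖) : ‖B‖ ≤ 1 / 2 * ‖A‖ := by
  have htri : ‖c‖ * ‖B‖ ≤ ‖c * B + A‖ + ‖A‖ := by
    simpa [norm_mul] using norm_sub_le (c * B + A) A
  nlinarith [norm_nonneg B]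

theorem norm_le_of_norm_mul_sub_mul_eq_one {B E F G : 𝕜} (hB : 1 ≤ ‖B‖) (hE : 1 ≤ ‖E‖)
    (hF : ‖F‖ ≤ 1 / 2 * ‖E‖) (hdet : ‖B * F - G * E‖ = 1) : ‖G‖ ≤ 3 / 2 * ‖B‖ := by
  have htri : ‖G‖ * ‖E‖ ≤ ‖B‖ * ‖F‖ + 1 := by
    simpa [norm_mul, hdet] using norm_sub_le (B * F) (B * F - G * E)
  nlinarith [norm_nonneg F, norm_nonneg G]

def IsAhead (a b : ℕ → 𝕜) (k i : ℕ) : Prop :=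
  ‖walkDet a b (k + 1) i‖ ≤ 1 / 2 * ‖walkDet a b k i‖

variable {a b : ℕ → 𝕜} {k i : ℕ}

theorem IsAhead.of_succ_left (hc : 7 / 2 ≤ ‖a (k + 1)‖) (h : IsAhead a b (k + 1) i) :
    IsAhead a b k i := by
  unfold IsAhead at h
  rw [walkDet_add_two_left] at h
  exact norm_le_half_of_norm_mul_add_le (r := 1 / 2) (by linarith) h

theorem IsAhead.of_succ_succ {S : Subring 𝕜} (hS : ∀ z ∈ S, z ≠ 0 → 1 ≤ ‖z‖)
    (hc : 7 / 2 ≤ ‖a (k + 1)‖) (hB : walkDet a b (k + 1) i ∈ S)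
    (hE : walkDet a b (k + 1) (i + 1) ∈ S) (h : IsAhead a b (k + 1) (i + 1)) :
    IsAhead a b k i := by
  have hdet := walkDet_mul_sub a b (k + 1) i
  rw [walkDet_add_two_left a b k i] at hdet
  by_cases hB0 : walkDet a b (k + 1) i = 0
  · simp [IsAhead, hB0]
  by_cases hE0 : walkDet a b (k + 1) (i + 1) = 0
  · have hF0 : walkDet a b (k + 2) (i + 1) = 0 := by
      simpa [IsAhead, hE0] using h
    simp [hE0, hF0] at hdet
  have hG := norm_le_of_norm_mul_sub_mul_eq_one (hS _ hB hB0) (hS _ hE hE0) h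
    (by rw [hdet]; simp)
  exact norm_le_half_of_norm_mul_add_le (r := 3 / 2) (by linarith) hG

end Norms

section Counting

variable {𝕜 : Type*} [NormedField 𝕜] {S : Subring 𝕜} {a b : ℕ → 𝕜} {n m : ℕ}

theorem not_isAhead_zero (haN : ∀ k, 1 ≤ k → k ≤ n → 7 / 2 ≤ ‖a k‖) :
    ∀ k ≤ n, ¬ IsAhead a b k 0
  | 0, _, h => by norm_num [IsAhead, walkDet] at h
  | k + 1, hk, h => not_isAhead_zero haN k (by omega) (h.of_succ_left (haN _ (by omega) hk))

theorem IsAhead.of_add (hS : ∀ z ∈ S, z ≠ 0 → 1 ≤ ‖z‖) (haS : ∀ k, 1 ≤ k → k ≤ n → a k ∈ S)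
    (haN : ∀ k, 1 ≤ k → k ≤ n → 7 / 2 ≤ ‖a k‖) (hbS : ∀ i, 1 ≤ i → i ≤ m → b i ∈ S)
    {k i : ℕ} : ∀ r, IsAhead a b (k + r) (i + r) → k + r ≤ n → i + r ≤ m + 1 → IsAhead a b k i
  | 0, h, _, _ => h
  | r + 1, h, hk, hi =>
    IsAhead.of_add hS haS haN hbS r
      (h.of_succ_succ hS (haN _ (by omega) hk) (walkDet_mem haS hbS (by omega) (by omega))
        (walkDet_mem haS hbS (by omega) hi))
      (by omega) (by omega)

theorem lt_of_isAhead (hS : ∀ z ∈ S, z ≠ 0 → 1 ≤ ‖z‖) (haS : ∀ k, 1 ≤ k → k ≤ n → a k ∈ S)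
    (haN : ∀ k, 1 ≤ k → k ≤ n → 7 / 2 ≤ ‖a k‖) (hbS : ∀ i, 1 ≤ i → i ≤ m → b i ∈ S)
    {k i : ℕ} (h : IsAhead a b k i) (hk : k ≤ n) (hi : i ≤ m + 1) : k < i := by
  by_contra! hik
  obtain ⟨j, rfl⟩ := Nat.exists_eq_add_of_le hik
  exact not_isAhead_zero haN j (by omega)
    (IsAhead.of_add hS haS haN hbS i (by rwa [zero_add, add_comm]) (by omega) (by omega))

theorem isAhead_of_walkDet_eq_zero {k i : ℕ} (h : walkDet a b (k + 1) i = 0) :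
    IsAhead a b k i := by
  simp [IsAhead, h]

theorem eqOn_of_isAhead (hS : ∀ z ∈ S, z ≠ 0 → 1 ≤ ‖z‖) (haS : ∀ k, 1 ≤ k → k ≤ n → a k ∈ S)
    (haN : ∀ k, 1 ≤ k → k ≤ n → 7 / 2 ≤ ‖a k‖) (hbS : ∀ i, 1 ≤ i → i ≤ n → b i ∈ S)
    (h : IsAhead a b n (n + 1)) : ∀ j ≤ n, ∀ l, 1 ≤ l → l ≤ j → b l = a l
  | 0, _, l, hl, hlj => absurd hlj (by omega)
  | j + 1, hj, l, hl, hlj => by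
    have hab := eqOn_of_isAhead hS haS haN hbS h j (by omega)
    obtain rfl | hlj := (Nat.le_succ_iff.mp hlj).symm
    · obtain ⟨r, rfl⟩ := Nat.exists_eq_add_of_le hj
      have hj' : IsAhead a b (j + 1) (j + 2) :=
        IsAhead.of_add hS haS haN hbS r (by rwa [show j + 2 + r = j + 1 + r + 1 by omega])
          (by omega) (by omega)
      obtain ⟨h₁, h₂⟩ := walkDet_of_eqOn hab
      have hsub : ‖a (j + 1) - b (j + 1)‖ ≤ 1 / 2 := by
        simpa [IsAhead, h₁, h₂] using hj'
      by_contra hne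
      have := hS _ (S.sub_mem (haS _ hl hj) (hbS _ hl hj)) (sub_ne_zero.mpr (Ne.symm hne))
      linarith
    · exact hab l hl hlj

end Counting

theorem large_digits_unique_shortest_general (d : ℕ)
    (n m : ℕ) (a b : ℕ → ℂ) (x : ℂ)
    (ha : ∀ k, 1 ≤ k → k ≤ n →
      a k ∈ ringInt d ∧ (4.17209 : ℝ) ≤ ‖a k‖)
    (hb : ∀ k, 1 ≤ k → k ≤ m → b k ∈ ringInt d)
    (s t : ℕ → ℂ)
    (hsn : s n = 0)
    (hsstep : ∀ k < n, a (k + 1) + s (k + 1) ≠ 0 ∧ s k = 1 / (a (k + 1) + s (k + 1)))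
    (hs0 : s 0 = x)
    (htm : t m = 0)
    (htstep : ∀ k < m, b (k + 1) + t (k + 1) ≠ 0 ∧ t k = 1 / (b (k + 1) + t (k + 1)))
    (ht0 : t 0 = x)
    (hne : ¬ (m = n ∧ ∀ k, 1 ≤ k → k ≤ n → b k = a k)) :
    n < m := by
  have hS : ∀ z ∈ ringIntSubring d, z ≠ 0 → 1 ≤ ‖z‖ := fun _ ↦ one_le_norm_of_mem_ringInt
  have haS : ∀ k, 1 ≤ k → k ≤ n → a k ∈ ringIntSubring d := fun k h₁ h₂ ↦ (ha k h₁ h₂).1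
  have haN : ∀ k, 1 ≤ k → k ≤ n → 7 / 2 ≤ ‖a k‖ := fun k h₁ h₂ ↦
    (by norm_num : (7 / 2 : ℝ) ≤ 4.17209).trans (ha k h₁ h₂).2
  have hx : IsAhead a b n (m + 1) := isAhead_of_walkDet_eq_zero <| walkDet_eq_zero_of_mul_eq
    (mul_convDen_eq_convNum hs0 hsn hsstep) (mul_convDen_eq_convNum ht0 htm htstep)
  obtain hlt | rfl := (Nat.lt_succ_iff.mp (lt_of_isAhead hS haS haN hb hx le_rfl le_rfl)).lt_or_eq
  · exact hlt
  · exact absurd ⟨rfl, eqOn_of_isAhead hS haS haN hb hx n le_rfl⟩ hne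

/-- Let `d ∈ {1,2,3,7,11}` and let `x = [a₁,…,a_n]` with all
`a_ℓ ∈ ℤ[ω_d]` and `|a_ℓ| ≥ 4.17209` (the value being encoded by the tail
sequence `s`, `s k = [a_{k+1},…,a_n]`, `s n = 0`, `s 0 = x`, with all
intermediate denominators nonzero). If `x = [b₁,…,b_m]` is any continued
fraction expansion of the same `x` with all `b_k ∈ ℤ[ω_d]` (tails `t`) and
`(b₁,…,b_m) ≠ (a₁,…,a_n)`, then `m > n`; hence `[a₁,…,a_n]` is the unique
shortest (geodesic) expansion of `x` with partial quotients in `ℤ[ω_d]`. -/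
theorem large_digits_unique_shortest (d : ℕ) (hd : d ∈ ({1, 2, 3, 7, 11} : Set ℕ))
    (n m : ℕ) (hn : 1 ≤ n) (hm : 1 ≤ m) (a b : ℕ → ℂ) (x : ℂ)
    (ha : ∀ k, 1 ≤ k → k ≤ n →
      a k ∈ ringInt d ∧ (4.17209 : ℝ) ≤ ‖a k‖)
    (hb : ∀ k, 1 ≤ k → k ≤ m → b k ∈ ringInt d)
    (s t : ℕ → ℂ)
    (hsn : s n = 0)
    (hsstep : ∀ k < n, a (k + 1) + s (k + 1) ≠ 0 ∧ s k = 1 / (a (k + 1) + s (k + 1)))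
    (hs0 : s 0 = x)
    (htm : t m = 0)
    (htstep : ∀ k < m, b (k + 1) + t (k + 1) ≠ 0 ∧ t k = 1 / (b (k + 1) + t (k + 1)))
    (ht0 : t 0 = x)
    (hne : ¬ (m = n ∧ ∀ k, 1 ≤ k → k ≤ n → b k = a k)) :
    n < m :=
  large_digits_unique_shortest_general d n m a b x ha hb s t hsn hsstep hs0 htm htstep ht0 hne
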